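/- Let G be a subgroup of Sym(Ω), let x ∈ Sym(Ω), and let f_L, f_R : Stacks(O) → Stacks(O). Then (f_L, f_R) is a perfect refiner for the right coset Gx if and only if (f_L, f_L) is a perfect refiner for G and f_R = f_L^x. In particular, there exists a perfect refiner for G if and only if there exist perfect refiners for all right cosets of G in Sym(Ω). -/

import Mathlib

/-- A right action of a group `G` on a type `O`, written exponentially in the paper:
`act o g` is `o ^ g`. -/
structure RAct (G : Type*) [Group G] (O : Type*) where
  act : O → G → O
  act_one : ∀ o : O, act o 1 = o
  act_mul : ∀ (o : O) (g h : G), act o (g * h) = act (act o g) h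

namespace RAct

variable {G : Type*} [Group G] {O : Type*}

/-- The induced entrywise right action on stacks (finite lists) with entries in `O`. -/
def stack (a : RAct G O) : RAct G (List O) where
  act S g := S.map fun o => a.act o g
  act_one S := by
    have h : (fun o => a.act o 1) = id := funext fun o => a.act_one o
    simp [h]
  act_mul S g h := by
    try simp only []
    rw [List.map_map]
    refine List.map_congr_left fun o _ => ?_
    exact a.act_mul o g h

/-- The transporter set `Iso(x, y) = {g : x ^ g = y}`. -/
def iso {X : Type*} (b : RAct G X) (x y : X) : Set G := {g | b.act x g = y}

/-- A refiner for `U`: a pair of functions on stacks with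
`U ∩ Iso(S, T) ⊆ Iso(f_L S, f_R T)` for all stacks `S`, `T`. -/
def IsRefiner (a : RAct G O) (U : Set G) (fL fR : List O → List O) : Prop :=
  ∀ S T : List O, U ∩ a.stack.iso S T ⊆ a.stack.iso (fL S) (fR T)

/-- A perfect refiner for `U`: a refiner such that
`U ∩ Iso(S, T) = Iso(S ‖ f_L S, T ‖ f_R T)` whenever `|S| = |T|`. -/
def IsPerfectRefiner (a : RAct G O) (U : Set G) (fL fR : List O → List O) : Prop :=
  IsRefiner a U fL fR ∧
    ∀ S T : List O, S.length = T.length →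
      U ∩ a.stack.iso S T = a.stack.iso (S ++ fL S) (T ++ fR T)

/-- The action of `x ∈ G` on functions on stacks: `f ^ x (S) = (f (S ^ x⁻¹)) ^ x`. -/
def conj (a : RAct G O) (f : List O → List O) (x : G) : List O → List O :=
  fun S => a.stack.act (f (a.stack.act S x⁻¹)) x

/-- The combination `f ‖ g` of two functions on stacks: `(f ‖ g)(S) = f S ‖ g S`. -/
def comb (f g : List O → List O) : List O → List O := fun S => f S ++ g S

end RAct

/-! Right multiplication by `x` maps `U ∩ Iso(S, T)` bijectively onto `U x ∩ Iso(S, T ^ x)`, and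
`Iso(S ‖ f_L S, T ‖ f_R T)` onto `Iso(S ‖ f_L S, T ^ x ‖ f_R ^ x (T ^ x))`. Hence `(f_L, f_R)` is a
perfect refiner for `U` exactly when `(f_L, f_R ^ x)` is one for `U x`. For a subgroup,
`1 ∈ Iso(S, S)` forces `f_R = f_L`. -/

namespace RAct

variable {G : Type*} [Group G] {O X : Type*}

section Action

variable (b : RAct G X)

lemma act_act_inv (s : X) (g : G) : b.act (b.act s g) g⁻¹ = s := by
  rw [← b.act_mul, mul_inv_cancel, b.act_one]

lemma act_inv_act (s : X) (g : G) : b.act (b.act s g⁻¹) g = s := by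
  simpa using b.act_act_inv s g⁻¹

lemma act_injective (g : G) : Function.Injective (b.act · g) :=
  Function.LeftInverse.injective (g := (b.act · g⁻¹)) fun s => b.act_act_inv s g

lemma forall_act_iff {P : X → Prop} (g : G) : (∀ t, P (b.act t g)) ↔ ∀ t, P t :=
  ⟨fun h t => by simpa only [act_inv_act] using h (b.act t g⁻¹), fun h t => h _⟩

lemma preimage_mul_right_iso_act (s t : X) (x : G) :
    (· * x) ⁻¹' b.iso s (b.act t x) = b.iso s t := by
  ext u
  simp only [Set.mem_preimage, iso, Set.mem_ofPred_eq, b.act_mul]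
  exact (b.act_injective x).eq_iff

end Action

lemma preimage_mul_right_rightCoset (U : Set G) (x : G) :
    (· * x) ⁻¹' {u | ∃ g ∈ U, u = g * x} = U := by
  ext u
  simp

lemma length_stack_act (a : RAct G O) (S : List O) (g : G) :
    (a.stack.act S g).length = S.length :=
  List.length_map _

lemma stack_act_append (a : RAct G O) (S T : List O) (g : G) :
    a.stack.act (S ++ T) g = a.stack.act S g ++ a.stack.act T g :=
  List.map_append

variable (a : RAct G O)

lemma conj_act (f : List O → List O) (x : G) (T : List O) :
    a.conj f x (a.stack.act T x) = a.stack.act (f T) x := by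
  rw [conj, act_act_inv]

lemma conj_one (f : List O → List O) : a.conj f 1 = f := by
  funext S
  simp only [conj, inv_one, a.stack.act_one]

lemma conj_conj (f : List O → List O) (x y : G) : a.conj (a.conj f x) y = a.conj f (x * y) := by
  funext S
  simp only [conj, mul_inv_rev, a.stack.act_mul]

variable {a}

lemma isRefiner_rightCoset_conj {U : Set G} {x : G} {fL fR : List O → List O} :
    a.IsRefiner {u | ∃ g ∈ U, u = g * x} fL (a.conj fR x) ↔ a.IsRefiner U fL fR := by
  refine forall_congr' fun S => ?_
  rw [← a.stack.forall_act_iff x]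
  refine forall_congr' fun T => ?_
  rw [conj_act, ← (mul_right_surjective x).preimage_subset_preimage_iff, Set.preimage_inter,
    preimage_mul_right_rightCoset, preimage_mul_right_iso_act, preimage_mul_right_iso_act]

lemma isPerfectRefiner_rightCoset_conj {U : Set G} {x : G} {fL fR : List O → List O} :
    a.IsPerfectRefiner {u | ∃ g ∈ U, u = g * x} fL (a.conj fR x) ↔ a.IsPerfectRefiner U fL fR := by
  refine and_congr isRefiner_rightCoset_conj (forall_congr' fun S => ?_)
  rw [← a.stack.forall_act_iff x]
  refine forall_congr' fun T => ?_
  rw [length_stack_act, conj_act, ← stack_act_append,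
    ← (mul_right_surjective x).preimage_injective.eq_iff, Set.preimage_inter,
    preimage_mul_right_rightCoset, preimage_mul_right_iso_act, preimage_mul_right_iso_act]

lemma isPerfectRefiner_rightCoset_iff {U : Set G} {x : G} {fL fR : List O → List O} :
    a.IsPerfectRefiner {u | ∃ g ∈ U, u = g * x} fL fR ↔
      a.IsPerfectRefiner U fL (a.conj fR x⁻¹) := by
  have h := isPerfectRefiner_rightCoset_conj (a := a) (U := U) (x := x) (fL := fL)
    (fR := a.conj fR x⁻¹)
  rwa [conj_conj, inv_mul_cancel, conj_one] at h

lemma IsPerfectRefiner.eq_of_one_mem {U : Set G} {fL fR : List O → List O}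
    (h : a.IsPerfectRefiner U fL fR) (hU : 1 ∈ U) : fR = fL := by
  funext S
  have hS : (1 : G) ∈ a.stack.iso (S ++ fL S) (S ++ fR S) := by
    rw [← h.2 S S rfl]
    exact ⟨hU, a.stack.act_one S⟩
  exact (List.append_cancel_left ((a.stack.act_one _).symm.trans hS)).symm

lemma isPerfectRefiner_rightCoset_subgroup_iff {H : Subgroup G} {x : G}
    {fL fR : List O → List O} :
    a.IsPerfectRefiner {u | ∃ g ∈ H, u = g * x} fL fR ↔
      a.IsPerfectRefiner (H : Set G) fL fL ∧ fR = a.conj fL x := by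
  refine (isPerfectRefiner_rightCoset_iff (U := (H : Set G))).trans ?_
  constructor
  · intro h
    have hfR := h.eq_of_one_mem H.one_mem
    refine ⟨hfR ▸ h, ?_⟩
    rw [← hfR, conj_conj, inv_mul_cancel, conj_one]
  · rintro ⟨h, rfl⟩
    rwa [conj_conj, mul_inv_cancel, conj_one]

end RAct

theorem stmt9_general {Ω : Type*} {O : Type*}
    (a : RAct (Equiv.Perm Ω) O) (G : Subgroup (Equiv.Perm Ω)) (x : Equiv.Perm Ω)
    (fL fR : List O → List O) :
    (a.IsPerfectRefiner {u : Equiv.Perm Ω | ∃ g ∈ G, u = g * x} fL fR ↔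
      a.IsPerfectRefiner (G : Set (Equiv.Perm Ω)) fL fL ∧ fR = a.conj fL x) ∧
    ((∃ f₁ f₂ : List O → List O, a.IsPerfectRefiner (G : Set (Equiv.Perm Ω)) f₁ f₂) ↔
      ∀ y : Equiv.Perm Ω, ∃ f₁ f₂ : List O → List O,
        a.IsPerfectRefiner {u : Equiv.Perm Ω | ∃ g ∈ G, u = g * y} f₁ f₂) := by
  refine ⟨RAct.isPerfectRefiner_rightCoset_subgroup_iff, ?_, ?_⟩
  · rintro ⟨f₁, f₂, h⟩ y
    exact ⟨f₁, a.conj f₂ y, RAct.isPerfectRefiner_rightCoset_conj.2 h⟩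
  · intro h
    obtain ⟨f₁, f₂, h⟩ := h 1
    exact ⟨f₁, _, RAct.isPerfectRefiner_rightCoset_iff.1 h⟩

/-- `(f_L, f_R)` is a perfect refiner for the right coset `G x` if and only if
`(f_L, f_L)` is a perfect refiner for `G` and `f_R = f_L ^ x`. In particular, `G` has a
perfect refiner if and only if every right coset of `G` in `Sym Ω` has one. -/
theorem stmt9 {Ω : Type*} [Fintype Ω] [Nonempty Ω] {O : Type*}
    (a : RAct (Equiv.Perm Ω) O) (G : Subgroup (Equiv.Perm Ω)) (x : Equiv.Perm Ω)
    (fL fR : List O → List O) :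
    (a.IsPerfectRefiner {u : Equiv.Perm Ω | ∃ g ∈ G, u = g * x} fL fR ↔
      a.IsPerfectRefiner (G : Set (Equiv.Perm Ω)) fL fL ∧ fR = a.conj fL x) ∧
    ((∃ f₁ f₂ : List O → List O, a.IsPerfectRefiner (G : Set (Equiv.Perm Ω)) f₁ f₂) ↔
      ∀ y : Equiv.Perm Ω, ∃ f₁ f₂ : List O → List O,
        a.IsPerfectRefiner {u : Equiv.Perm Ω | ∃ g ∈ G, u = g * y} f₁ f₂) :=
  stmt9_general a G x fL fR
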